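/- arXiv:2312.11136 — 10 statements merged into one kernel-verified Lean document; each statement's English description precedes it below -/
import Mathlib

section
/- Let X : Ω → 𝒳 and C : Ω → 𝒞 be random variables with countable ranges, Z : Ω → {0,1}, and Y₁, Y₀ integrable real random variables. Define Y := Z·Y₁ + (1−Z)·Y₀ (consistency). Fix x ∈ 𝒳, c ∈ 𝒞, z ∈ {0,1} with P({X=x} ∩ {Z=z} ∩ {C=c}) > 0, and assume that under the conditional measure P(· | X=x) the random variable Z is independent of the triple (Y₁, Y₀, C). Then E[Y_z | {X=x} ∩ {C=c}] = E[Y | {X=x} ∩ {Z=z} ∩ {C=c}]. -/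
/-!
Write `Y_z = g (Y₁, Y₀, C)` and `{C = c} = (Y₁, Y₀, C) ⁻¹' S`. Under `P(· | X = x)` the event
`{Z = z}` is independent of `(Y₁, Y₀, C)`, so further conditioning on it does not change the mean
of `Y_z` on `{C = c}`; and on `{Z = z}` the observed `Y` coincides with `Y_z`.
-/

open MeasureTheory ProbabilityTheory
open scoped Classical

/-- Conditional probability of `A` given `B`: `P(A | B) := P(A ∩ B) / P(B)`. -/
noncomputable def cPr {Ω : Type*} [MeasurableSpace Ω] (P : Measure Ω) (A B : Set Ω) : ℝ :=
  (P (A ∩ B)).toReal / (P B).toReal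

/-- Conditional expectation of `W` given event `B`: `E[W | B] := E[W·1_B] / P(B)`. -/
noncomputable def cExp {Ω : Type*} [MeasurableSpace Ω] (P : Measure Ω) (W : Ω → ℝ) (B : Set Ω) : ℝ :=
  (∫ ω in B, W ω ∂P) / (P B).toReal

section

variable {Ω : Type*} [MeasurableSpace Ω] {μ : Measure Ω}

lemma cExp_cond [IsFiniteMeasure μ] {A S : Set Ω} (hA : MeasurableSet A) (hA0 : μ A ≠ 0)
    (hS : MeasurableSet S) (h : Ω → ℝ) :
    cExp μ[|A] h S = cExp μ h (A ∩ S) := by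
  have hrestrict : μ[|A].restrict S = (μ A)⁻¹ • μ.restrict (A ∩ S) := by
    rw [ProbabilityTheory.cond, Measure.restrict_smul, Measure.restrict_restrict hS, Set.inter_comm]
  have hinv : (μ A).toReal⁻¹ ≠ 0 :=
    inv_ne_zero (ENNReal.toReal_ne_zero.mpr ⟨hA0, measure_ne_top μ A⟩)
  rw [cExp, cExp, hrestrict, integral_smul_measure, cond_apply hA, ENNReal.toReal_mul,
    ENNReal.toReal_inv, smul_eq_mul, mul_div_mul_left _ _ hinv]

lemma cExp_congr {f g : Ω → ℝ} {B : Set Ω} (hB : MeasurableSet B) (hfg : Set.EqOn f g B) :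
    cExp μ f B = cExp μ g B := by
  rw [cExp, cExp, setIntegral_congr_fun hB hfg]

lemma cExp_preimage_inter_eq_of_indepFun [IsFiniteMeasure μ] {α β : Type*}
    [MeasurableSpace α] [MeasurableSpace β] {Z : Ω → α} {W : Ω → β} (hZW : IndepFun Z W μ)
    (hZ : Measurable Z) (hW : Measurable W) {s : Set α} {t : Set β} (hs : MeasurableSet s)
    (ht : MeasurableSet t) (hs0 : μ (Z ⁻¹' s) ≠ 0) {g : β → ℝ} (hg : Measurable g) :
    cExp μ (g ∘ W) (Z ⁻¹' s ∩ W ⁻¹' t) = cExp μ (g ∘ W) (W ⁻¹' t) := by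
  have hindicator (ω : Ω) : t.indicator g (W ω) = (W ⁻¹' t).indicator (g ∘ W) ω :=
    (Set.indicator_comp_right W).symm
  have hintegral : ∫ ω in Z ⁻¹' s ∩ W ⁻¹' t, g (W ω) ∂μ
      = μ.real (Z ⁻¹' s) * ∫ ω in W ⁻¹' t, g (W ω) ∂μ :=
    calc ∫ ω in Z ⁻¹' s ∩ W ⁻¹' t, g (W ω) ∂μ = ∫ ω in Z ⁻¹' s, t.indicator g (W ω) ∂μ := by
          simp_rw [hindicator, setIntegral_indicator (hW ht), Function.comp_apply]
      _ = μ.real (Z ⁻¹' s) * ∫ ω, t.indicator g (W ω) ∂μ :=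
          ((IndepFun_iff_Indep Z W μ).1 hZW).setIntegral_eq_mul hZ.comap_le hW.aemeasurable
            ⟨s, hs, rfl⟩ (hg.indicator ht).aestronglyMeasurable
      _ = μ.real (Z ⁻¹' s) * ∫ ω in W ⁻¹' t, g (W ω) ∂μ := by
          simp_rw [hindicator, integral_indicator (hW ht), Function.comp_apply]
  have hmeasure : μ (Z ⁻¹' s ∩ W ⁻¹' t) = μ (Z ⁻¹' s) * μ (W ⁻¹' t) :=
    hZW.measure_inter_preimage_eq_mul s t hs ht
  have hs0_real : μ.real (Z ⁻¹' s) ≠ 0 :=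
    ENNReal.toReal_ne_zero.mpr ⟨hs0, measure_ne_top μ _⟩
  rw [cExp, cExp, Function.comp_def, hintegral, hmeasure, ENNReal.toReal_mul, ← measureReal_def,
    mul_div_mul_left _ _ hs0_real]

end

theorem stmt2_general {Ω 𝒳 𝒞 : Type*} [MeasurableSpace Ω]
    [MeasurableSpace 𝒳] [MeasurableSingletonClass 𝒳]
    [MeasurableSpace 𝒞] [MeasurableSingletonClass 𝒞]
    (P : Measure Ω) [IsProbabilityMeasure P]
    (X : Ω → 𝒳) (C : Ω → 𝒞) (Z : Ω → Fin 2) (Y₁ Y₀ : Ω → ℝ)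
    (hX : Measurable X) (hC : Measurable C) (hZ : Measurable Z)
    (hY₁m : Measurable Y₁) (hY₀m : Measurable Y₀)
    (Y : Ω → ℝ)
    (hYdef : Y = fun ω => ((Z ω : ℕ) : ℝ) * Y₁ ω + (1 - ((Z ω : ℕ) : ℝ)) * Y₀ ω)
    (x : 𝒳) (c : 𝒞) (z : Fin 2)
    (hpos : 0 < P (X ⁻¹' {x} ∩ Z ⁻¹' {z} ∩ C ⁻¹' {c}))
    (hindep : IndepFun Z (fun ω => (Y₁ ω, Y₀ ω, C ω)) (P[|X ⁻¹' {x}])) :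
    cExp P (if z = 1 then Y₁ else Y₀) (X ⁻¹' {x} ∩ C ⁻¹' {c})
      = cExp P Y (X ⁻¹' {x} ∩ Z ⁻¹' {z} ∩ C ⁻¹' {c}) := by
  set W : Ω → ℝ × ℝ × 𝒞 := fun ω => (Y₁ ω, Y₀ ω, C ω)
  let g : ℝ × ℝ × 𝒞 → ℝ := if z = 1 then Prod.fst else fun p => p.2.1
  have hYz : (if z = 1 then Y₁ else Y₀) = g ∘ W := by unfold g; split_ifs <;> rfl
  have hg : Measurable g := by unfold g; split_ifs <;> fun_prop
  have hCW : C ⁻¹' {c} = W ⁻¹' (Set.univ ×ˢ Set.univ ×ˢ {c}) := by ext; simp [W]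
  have hA := hX (measurableSet_singleton x)
  have hZs := hZ (measurableSet_singleton z)
  have hCs := hC (measurableSet_singleton c)
  have hAZ0 : P (X ⁻¹' {x} ∩ Z ⁻¹' {z}) ≠ 0 :=
    fun h => hpos.ne' (measure_mono_null Set.inter_subset_left h)
  have hA0 : P (X ⁻¹' {x}) ≠ 0 := fun h => hAZ0 (measure_mono_null Set.inter_subset_left h)
  have hconsistency : Set.EqOn Y (if z = 1 then Y₁ else Y₀) (Z ⁻¹' {z}) := by
    intro ω (hω : Z ω = z)
    subst hYdef
    fin_cases z <;> simp [hω]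
  calc cExp P (if z = 1 then Y₁ else Y₀) (X ⁻¹' {x} ∩ C ⁻¹' {c})
      = cExp P[|X ⁻¹' {x}] (g ∘ W) (C ⁻¹' {c}) := by rw [cExp_cond hA hA0 hCs, hYz]
    _ = cExp P[|X ⁻¹' {x}] (g ∘ W) (Z ⁻¹' {z} ∩ C ⁻¹' {c}) := by
        rw [hCW, cExp_preimage_inter_eq_of_indepFun hindep hZ (by fun_prop)
          (measurableSet_singleton z) (by measurability) (cond_pos_of_inter_ne_zero hA hAZ0).ne' hg]
    _ = cExp P Y (X ⁻¹' {x} ∩ Z ⁻¹' {z} ∩ C ⁻¹' {c}) := by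
        rw [cExp_cond hA hA0 (hZs.inter hCs), ← Set.inter_assoc, ← hYz]
        exact (cExp_congr ((hA.inter hZs).inter hCs)
          (hconsistency.mono fun _ hω => hω.1.2)).symm

/-- Under treatment assignment ignorability given `X = x` (independence of `Z` from the
triple `(Y₁, Y₀, C)` under `P(· | X=x)`) and consistency `Y = Z·Y₁ + (1−Z)·Y₀`, the mean
of the potential outcome `Y_z` given `{X=x} ∩ {C=c}` equals the mean of the observed
outcome `Y` given `{X=x} ∩ {Z=z} ∩ {C=c}`. -/
theorem stmt2 {Ω 𝒳 𝒞 : Type*} [MeasurableSpace Ω]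
    [Countable 𝒳] [MeasurableSpace 𝒳] [MeasurableSingletonClass 𝒳]
    [Countable 𝒞] [MeasurableSpace 𝒞] [MeasurableSingletonClass 𝒞]
    (P : Measure Ω) [IsProbabilityMeasure P]
    (X : Ω → 𝒳) (C : Ω → 𝒞) (Z : Ω → Fin 2) (Y₁ Y₀ : Ω → ℝ)
    (hX : Measurable X) (hC : Measurable C) (hZ : Measurable Z)
    (hY₁m : Measurable Y₁) (hY₀m : Measurable Y₀)
    (hY₁int : Integrable Y₁ P) (hY₀int : Integrable Y₀ P)
    (Y : Ω → ℝ)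
    (hYdef : Y = fun ω => ((Z ω : ℕ) : ℝ) * Y₁ ω + (1 - ((Z ω : ℕ) : ℝ)) * Y₀ ω)
    (x : 𝒳) (c : 𝒞) (z : Fin 2)
    (hpos : 0 < P (X ⁻¹' {x} ∩ Z ⁻¹' {z} ∩ C ⁻¹' {c}))
    (hindep : IndepFun Z (fun ω => (Y₁ ω, Y₀ ω, C ω)) (P[|X ⁻¹' {x}])) :
    cExp P (if z = 1 then Y₁ else Y₀) (X ⁻¹' {x} ∩ C ⁻¹' {c})
      = cExp P Y (X ⁻¹' {x} ∩ Z ⁻¹' {z} ∩ C ⁻¹' {c}) :=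
  stmt2_general P X C Z Y₁ Y₀ hX hC hZ hY₁m hY₀m Y hYdef x c z hpos hindep
end

section
/- Let X : Ω → 𝒳 have countable range, Z, C, R : Ω → {0,1}, and Y an integrable real random variable. Fix x ∈ 𝒳 and assume for both c ∈ {0,1}: P({X=x} ∩ {Z=0} ∩ {C=c} ∩ {R=1}) > 0, and under the conditional measure P(· | {X=x} ∩ {Z=0} ∩ {C=c}) the random variables R and Y are independent (latent missing at random). Then E[Y | {X=x} ∩ {Z=0} ∩ {R=1}] = Σ_{c ∈ {0,1}} E[Y | {X=x} ∩ {Z=0} ∩ {C=c}] · P(C=c | {X=x} ∩ {Z=0} ∩ {R=1}). -/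
/-!
Split the responders `{X=x} ∩ {Z=0} ∩ {R=1}` according to the value of `C` (law of total
expectation). Inside a stratum `{X=x} ∩ {Z=0} ∩ {C=c}`, `R` and `Y` are independent under the
conditional measure, so conditioning further on `{R=1}` does not change the mean of `Y`.
-/

open MeasureTheory ProbabilityTheory
open scoped Classical

section

variable {Ω : Type*} [MeasurableSpace Ω] {P : Measure Ω}

lemma integral_cond_eq_inv_mul_setIntegral (B : Set Ω) (Y : Ω → ℝ) :
    ∫ ω, Y ω ∂P[|B] = (P B).toReal⁻¹ * ∫ ω in B, Y ω ∂P := by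
  rw [ProbabilityTheory.cond, integral_smul_measure, ENNReal.toReal_inv, smul_eq_mul]

lemma cExp_eq_integral_cond (Y : Ω → ℝ) (B : Set Ω) : cExp P Y B = ∫ ω, Y ω ∂P[|B] := by
  rw [integral_cond_eq_inv_mul_setIntegral, cExp, div_eq_inv_mul]

lemma ProbabilityTheory.IndepFun.integral_cond_preimage_eq [IsFiniteMeasure P]
    {β : Type*} [MeasurableSpace β]
    {R : Ω → β} {Y : Ω → ℝ} (hind : IndepFun R Y P) (hR : Measurable R)
    (hY : AEMeasurable Y P) {s : Set β} (hs : MeasurableSet s) (hpos : P (R ⁻¹' s) ≠ 0) :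
    ∫ ω, Y ω ∂P[|R ⁻¹' s] = ∫ ω, Y ω ∂P := by
  have hsplit : ∫ ω in R ⁻¹' s, Y ω ∂P = P.real (R ⁻¹' s) * ∫ ω, Y ω ∂P :=
    ((IndepFun_iff_Indep R Y P).1 hind).setIntegral_eq_mul (f := id) hR.comap_le hY
      ⟨s, hs, rfl⟩ aestronglyMeasurable_id
  have hreal : P.real (R ⁻¹' s) ≠ 0 := ENNReal.toReal_ne_zero.2 ⟨hpos, measure_ne_top P _⟩
  rw [integral_cond_eq_inv_mul_setIntegral, hsplit, ← measureReal_def, inv_mul_cancel_left₀ hreal]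

lemma cExp_inter_preimage_eq [IsFiniteMeasure P] {β : Type*} [MeasurableSpace β]
    {B : Set Ω} {R : Ω → β} {Y : Ω → ℝ} (hind : IndepFun R Y P[|B]) (hB : MeasurableSet B)
    (hR : Measurable R) (hY : AEMeasurable Y P) {s : Set β} (hs : MeasurableSet s)
    (hpos : P (B ∩ R ⁻¹' s) ≠ 0) :
    cExp P Y (B ∩ R ⁻¹' s) = cExp P Y B := by
  have hB0 : P B ≠ 0 := fun h => hpos (measure_mono_null Set.inter_subset_left h)
  have := cond_isProbabilityMeasure (μ := P) hB0
  rw [cExp_eq_integral_cond, cExp_eq_integral_cond,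
    ← cond_cond_eq_cond_inter hB (hR hs), hind.integral_cond_preimage_eq hR
      (hY.mono_ac cond_absolutelyContinuous) hs (cond_pos_of_inter_ne_zero hB hpos).ne']

lemma cExp_inter_mul_cPr [IsFiniteMeasure P] (Y : Ω → ℝ) (E F : Set Ω) :
    cExp P Y (E ∩ F) * cPr P F E = (∫ ω in E ∩ F, Y ω ∂P) / (P E).toReal := by
  by_cases h : P (E ∩ F) = 0
  -- both sides vanish: `cExp` divides by `0` and the integral is over a null set
  · simp [cExp, cPr, h, setIntegral_measure_zero Y h]
  · have hreal : (P (E ∩ F)).toReal ≠ 0 := ENNReal.toReal_ne_zero.2 ⟨h, measure_ne_top P _⟩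
    rw [cExp, cPr, Set.inter_comm F E]
    field_simp

lemma cExp_eq_sum_cExp_inter_mul_cPr [IsFiniteMeasure P] {ι : Type*} [Fintype ι]
    {C : Ω → ι} (hC : ∀ c, MeasurableSet (C ⁻¹' {c})) {Y : Ω → ℝ} (hY : Integrable Y P)
    {E : Set Ω} (hE : MeasurableSet E) :
    cExp P Y E = ∑ c, cExp P Y (E ∩ C ⁻¹' {c}) * cPr P (C ⁻¹' {c}) E := by
  have hpart : E = ⋃ c, E ∩ C ⁻¹' {c} := by
    ext ω
    simp
  have hdisj : Pairwise (Function.onFun Disjoint fun c => E ∩ C ⁻¹' {c}) := fun c d hcd =>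
    ((Set.disjoint_singleton.2 hcd).preimage C).inter_left' E |>.inter_right' E
  simp_rw [cExp_inter_mul_cPr, ← Finset.sum_div]
  rw [cExp, ← integral_iUnion_fintype (fun c => hE.inter (hC c)) hdisj
    (fun _ => hY.integrableOn), ← hpart]

end

theorem stmt6_general {Ω 𝒳 : Type*} [MeasurableSpace Ω]
    [MeasurableSpace 𝒳] [MeasurableSingletonClass 𝒳]
    (P : Measure Ω) [IsProbabilityMeasure P]
    (X : Ω → 𝒳) (Z C R : Ω → Fin 2) (Y : Ω → ℝ)
    (hX : Measurable X) (hZ : Measurable Z) (hC : Measurable C) (hR : Measurable R)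
    (hYint : Integrable Y P)
    (x : 𝒳)
    (hpos : ∀ c : Fin 2, 0 < P (X ⁻¹' {x} ∩ Z ⁻¹' {0} ∩ C ⁻¹' {c} ∩ R ⁻¹' {1}))
    (hLMAR : ∀ c : Fin 2, IndepFun R Y (P[|X ⁻¹' {x} ∩ Z ⁻¹' {0} ∩ C ⁻¹' {c}])) :
    cExp P Y (X ⁻¹' {x} ∩ Z ⁻¹' {0} ∩ R ⁻¹' {1})
      = ∑ c : Fin 2, cExp P Y (X ⁻¹' {x} ∩ Z ⁻¹' {0} ∩ C ⁻¹' {c})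
          * cPr P (C ⁻¹' {c}) (X ⁻¹' {x} ∩ Z ⁻¹' {0} ∩ R ⁻¹' {1}) := by
  set A := X ⁻¹' {x} ∩ Z ⁻¹' {0}
  have hA : MeasurableSet A := hX (.singleton x) |>.inter (hZ (.singleton 0))
  rw [cExp_eq_sum_cExp_inter_mul_cPr (fun c => hC (.singleton c)) hYint
    (hA.inter (hR (.singleton 1)))]
  refine Finset.sum_congr rfl fun c _ => ?_
  rw [Set.inter_right_comm, cExp_inter_preimage_eq (hLMAR c) (hA.inter (hC (.singleton c))) hR
    hYint.aemeasurable (.singleton 1) (hpos c).ne']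

/-- The outcome mixture equation under latent missing at random (LMAR): the mean of the
outcome among control-arm responders is the mixture of the stratum-specific conditional
outcome means with weights `P(C=c | {X=x} ∩ {Z=0} ∩ {R=1})`. -/
theorem stmt6 {Ω 𝒳 : Type*} [MeasurableSpace Ω]
    [Countable 𝒳] [MeasurableSpace 𝒳] [MeasurableSingletonClass 𝒳]
    (P : Measure Ω) [IsProbabilityMeasure P]
    (X : Ω → 𝒳) (Z C R : Ω → Fin 2) (Y : Ω → ℝ)
    (hX : Measurable X) (hZ : Measurable Z) (hC : Measurable C) (hR : Measurable R)
    (hYm : Measurable Y) (hYint : Integrable Y P)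
    (x : 𝒳)
    (hpos : ∀ c : Fin 2, 0 < P (X ⁻¹' {x} ∩ Z ⁻¹' {0} ∩ C ⁻¹' {c} ∩ R ⁻¹' {1}))
    (hLMAR : ∀ c : Fin 2, IndepFun R Y (P[|X ⁻¹' {x} ∩ Z ⁻¹' {0} ∩ C ⁻¹' {c}])) :
    cExp P Y (X ⁻¹' {x} ∩ Z ⁻¹' {0} ∩ R ⁻¹' {1})
      = ∑ c : Fin 2, cExp P Y (X ⁻¹' {x} ∩ Z ⁻¹' {0} ∩ C ⁻¹' {c})
          * cPr P (C ⁻¹' {c}) (X ⁻¹' {x} ∩ Z ⁻¹' {0} ∩ R ⁻¹' {1}) :=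
  stmt6_general P X Z C R Y hX hZ hC hR hYint x hpos hLMAR
end

section
/- Let X : Ω → 𝒳 have countable range, Z, C, R : Ω → {0,1}, and Y : Ω → ℝ a random variable. Fix x ∈ 𝒳 and assume for both c ∈ {0,1}: P({X=x} ∩ {Z=0} ∩ {C=c}) > 0; under the conditional measure P(· | {X=x} ∩ {Z=0} ∩ {C=c}) the random variables R and Y are independent (latent missing at random); and P(R=1 | {X=x} ∩ {Z=0} ∩ {C=c}) = P(R=1 | {X=x} ∩ {Z=0}) (response principal ignorability). Then under the conditional measure P(· | {X=x} ∩ {Z=0}) the random variables R and Y are independent; i.e., the outcome is missing at random in the control arm. -/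
/-!
Write `B = {X = x} ∩ {Z = 0}` and work under `P(· | B)`, whose fibres over `C` are the events
conditioned on in the hypotheses. Response principal ignorability says that `P(R = 1 | C = c)`
does not depend on `c`; since `R` is binary, this makes `R` independent of `C`. Latent missing at
random makes `R` independent of `Y` on each fibre `{C = c}`, and since the law of `R` is the same
on every fibre, summing over the fibres gives the independence of `R` and `Y`.
-/

open MeasureTheory ProbabilityTheory
open scoped Classical

namespace ProbabilityTheory

variable {Ω ι β γ : Type*} [MeasurableSpace Ω] {μ : Measure Ω}

lemma measure_compl_inter_eq_mul [IsZeroOrProbabilityMeasure μ] {A E : Set Ω}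
    (hA : MeasurableSet A) (h : μ (A ∩ E) = μ A * μ E) : μ (Aᶜ ∩ E) = μ Aᶜ * μ E := by
  have hE : μ Set.univ * μ E = μ E := by
    rcases IsZeroOrProbabilityMeasure.measure_univ (μ := μ) with h0 | h1
    · simp [Measure.measure_univ_eq_zero.mp h0]
    · rw [h1, one_mul]
  refine (ENNReal.add_left_inj (by finiteness : μ A * μ E ≠ ⊤)).mp ?_
  calc μ (Aᶜ ∩ E) + μ A * μ E = μ E := by
        rw [← h, add_comm, Set.inter_comm A E, Set.inter_comm Aᶜ E, ← Set.sdiff_eq,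
          measure_inter_add_sdiff E hA]
    _ = μ Aᶜ * μ E + μ A * μ E := by
        rw [← add_mul, add_comm, measure_add_measure_compl hA, hE]

lemma indepFun_of_measure_inter_preimage_singleton_eq_mul
    [MeasurableSpace β] [Countable β] [MeasurableSingletonClass β]
    [MeasurableSpace γ] [Countable γ] [MeasurableSingletonClass γ] [IsFiniteMeasure μ]
    {f : Ω → β} {g : Ω → γ} (hf : Measurable f) (hg : Measurable g)
    (h : ∀ a b, μ (f ⁻¹' {a} ∩ g ⁻¹' {b}) = μ (f ⁻¹' {a}) * μ (g ⁻¹' {b})) : f ⟂ᵢ[μ] g := by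
  rw [indepFun_iff_map_prod_eq_prod_map_map hf.aemeasurable hg.aemeasurable]
  refine Measure.ext_of_singleton fun ⟨a, b⟩ ↦ ?_
  rw [← Set.singleton_prod_singleton, Measure.prod_prod, Measure.map_apply (hf.prodMk hg)
    ((measurableSet_singleton a).prod (measurableSet_singleton b)), Set.mk_preimage_prod,
    Measure.map_apply hf (measurableSet_singleton a),
    Measure.map_apply hg (measurableSet_singleton b), h]

lemma indepFun_of_measure_preimage_one_inter_eq_mul
    [MeasurableSpace ι] [Countable ι] [MeasurableSingletonClass ι] [IsZeroOrProbabilityMeasure μ]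
    {R : Ω → Fin 2} {C : Ω → ι} (hR : Measurable R) (hC : Measurable C)
    (h : ∀ c, μ (R ⁻¹' {1} ∩ C ⁻¹' {c}) = μ (R ⁻¹' {1}) * μ (C ⁻¹' {c})) : R ⟂ᵢ[μ] C := by
  refine indepFun_of_measure_inter_preimage_singleton_eq_mul hR hC fun r c ↦ ?_
  fin_cases r
  · have hcompl : R ⁻¹' {0} = (R ⁻¹' {1})ᶜ := by
      ext ω
      simp only [Set.mem_preimage, Set.mem_singleton_iff, Set.mem_compl_iff]
      omega
    simpa [hcompl] using measure_compl_inter_eq_mul (hR (measurableSet_singleton 1)) (h c)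
  · exact h c

lemma tsum_measure_preimage_singleton_inter
    [MeasurableSpace ι] [Countable ι] [MeasurableSingletonClass ι] {C : Ω → ι}
    (hC : Measurable C) {A : Set Ω} (hA : MeasurableSet A) :
    ∑' c, μ (C ⁻¹' {c} ∩ A) = μ A := by
  rw [← measure_iUnion, ← Set.iUnion_inter, ← Set.preimage_iUnion, Set.iUnion_of_singleton,
    Set.preimage_univ, Set.univ_inter]
  · exact fun i j hij ↦ ((Set.disjoint_singleton.2 hij).preimage C).mono
      Set.inter_subset_left Set.inter_subset_left
  · exact fun c ↦ (hC (measurableSet_singleton c)).inter hA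

/-- Summing over the fibres of `C`,
`μ (R ∈ s, Y ∈ t) = ∑ c, μ (C = c) μ[R ∈ s | C = c] μ[Y ∈ t | C = c] = μ (R ∈ s) μ (Y ∈ t)`. -/
lemma indepFun_of_indepFun_cond_fiber
    [MeasurableSpace ι] [Countable ι] [MeasurableSingletonClass ι]
    [MeasurableSpace β] [MeasurableSpace γ] [IsFiniteMeasure μ]
    {C : Ω → ι} {R : Ω → β} {Y : Ω → γ} (hC : Measurable C) (hR : Measurable R)
    (hY : Measurable Y) (hRC : R ⟂ᵢ[μ] C) (hRY : ∀ c, R ⟂ᵢ[μ[|C ⁻¹' {c}]] Y) : R ⟂ᵢ[μ] Y := by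
  rw [indepFun_iff_measure_inter_preimage_eq_mul]
  intro s t hs ht
  have fibre (c : ι) :
      μ (C ⁻¹' {c} ∩ (R ⁻¹' s ∩ Y ⁻¹' t)) = μ (R ⁻¹' s) * μ (C ⁻¹' {c} ∩ Y ⁻¹' t) := by
    have hc := hC (measurableSet_singleton c)
    rw [← cond_mul_eq_inter hc, (hRY c).measure_inter_preimage_eq_mul _ _ hs ht,
      ← cond_mul_eq_inter hc, mul_right_comm, cond_mul_eq_inter hc, Set.inter_comm,
      hRC.measure_inter_preimage_eq_mul _ _ hs (measurableSet_singleton c)]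
    ring
  rw [← tsum_measure_preimage_singleton_inter hC ((hR hs).inter (hY ht)),
    ← tsum_measure_preimage_singleton_inter hC (hY ht), ← ENNReal.tsum_mul_left]
  exact tsum_congr fibre

end ProbabilityTheory

lemma cPr_eq_toReal_cond {Ω : Type*} [MeasurableSpace Ω] (P : Measure Ω) (A : Set Ω)
    {B : Set Ω} (hB : MeasurableSet B) : cPr P A B = (P[|B] A).toReal := by
  rw [cPr, cond_apply hB, ENNReal.toReal_mul, ENNReal.toReal_inv, Set.inter_comm, div_eq_inv_mul]

theorem stmt7_general {Ω 𝒳 : Type*} [MeasurableSpace Ω]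
    [MeasurableSpace 𝒳] [MeasurableSingletonClass 𝒳]
    (P : Measure Ω) [IsProbabilityMeasure P]
    (X : Ω → 𝒳) (Z C R : Ω → Fin 2) (Y : Ω → ℝ)
    (hX : Measurable X) (hZ : Measurable Z) (hC : Measurable C) (hR : Measurable R)
    (hYm : Measurable Y)
    (x : 𝒳)
    (hLMAR : ∀ c : Fin 2, IndepFun R Y (P[|X ⁻¹' {x} ∩ Z ⁻¹' {0} ∩ C ⁻¹' {c}]))
    (hrPI : ∀ c : Fin 2, cPr P (R ⁻¹' {1}) (X ⁻¹' {x} ∩ Z ⁻¹' {0} ∩ C ⁻¹' {c})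
        = cPr P (R ⁻¹' {1}) (X ⁻¹' {x} ∩ Z ⁻¹' {0})) :
    IndepFun R Y (P[|X ⁻¹' {x} ∩ Z ⁻¹' {0}]) := by
  set B := X ⁻¹' {x} ∩ Z ⁻¹' {0}
  have hB : MeasurableSet B :=
    (hX (measurableSet_singleton x)).inter (hZ (measurableSet_singleton 0))
  have hCc (c : Fin 2) : MeasurableSet (C ⁻¹' {c}) := hC (measurableSet_singleton c)
  have hcond (c : Fin 2) : P[|B][|C ⁻¹' {c}] = P[|B ∩ C ⁻¹' {c}] :=
    cond_cond_eq_cond_inter hB (hCc c) P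
  have hresponse (c : Fin 2) : P[|B ∩ C ⁻¹' {c}] (R ⁻¹' {1}) = P[|B] (R ⁻¹' {1}) := by
    rw [← ENNReal.toReal_eq_toReal_iff' (measure_ne_top _ _) (measure_ne_top _ _),
      ← cPr_eq_toReal_cond P _ (hB.inter (hCc c)), ← cPr_eq_toReal_cond P _ hB, hrPI c]
  refine indepFun_of_indepFun_cond_fiber hC hR hYm ?_ fun c ↦ hcond c ▸ hLMAR c
  refine indepFun_of_measure_preimage_one_inter_eq_mul hR hC fun c ↦ ?_
  rw [Set.inter_comm, ← cond_mul_eq_inter (hCc c), hcond, hresponse]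

/-- LMAR combined with response principal ignorability (rPI) implies the outcome is
missing at random (MAR) in the control arm: `R ⫫ Y` under `P(· | {X=x} ∩ {Z=0})`. -/
theorem stmt7 {Ω 𝒳 : Type*} [MeasurableSpace Ω]
    [Countable 𝒳] [MeasurableSpace 𝒳] [MeasurableSingletonClass 𝒳]
    (P : Measure Ω) [IsProbabilityMeasure P]
    (X : Ω → 𝒳) (Z C R : Ω → Fin 2) (Y : Ω → ℝ)
    (hX : Measurable X) (hZ : Measurable Z) (hC : Measurable C) (hR : Measurable R)
    (hYm : Measurable Y)
    (x : 𝒳)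
    (hpos : ∀ c : Fin 2, 0 < P (X ⁻¹' {x} ∩ Z ⁻¹' {0} ∩ C ⁻¹' {c}))
    (hLMAR : ∀ c : Fin 2, IndepFun R Y (P[|X ⁻¹' {x} ∩ Z ⁻¹' {0} ∩ C ⁻¹' {c}]))
    (hrPI : ∀ c : Fin 2, cPr P (R ⁻¹' {1}) (X ⁻¹' {x} ∩ Z ⁻¹' {0} ∩ C ⁻¹' {c})
        = cPr P (R ⁻¹' {1}) (X ⁻¹' {x} ∩ Z ⁻¹' {0})) :
    IndepFun R Y (P[|X ⁻¹' {x} ∩ Z ⁻¹' {0}]) :=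
  stmt7_general P X Z C R Y hX hZ hC hR hYm x hLMAR hrPI
end

section
/- Let X : Ω → 𝒳 have countable range, Z, C, R : Ω → {0,1}, and Y : Ω → ℝ a random variable. Fix x ∈ 𝒳 and assume: P({X=x} ∩ {Z=0} ∩ {C=c}) > 0 for both c ∈ {0,1}; under the conditional measure P(· | {X=x} ∩ {Z=0} ∩ {C=c}) the random variables R and Y are independent for both c ∈ {0,1} (latent missing at random); and under the conditional measure P(· | {X=x} ∩ {Z=0}) the random variables C and Y are independent (principal ignorability). Then under the conditional measure P(· | {X=x} ∩ {Z=0}) the random variables R and Y are independent; i.e., the outcome is missing at random in the control arm. -/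
/-!
Condition on the finitely many values `c` of `C`. By the law of total probability,
`μ (A ∩ B) = ∑ c, μ {C = c} * μ[A ∩ B | C = c]`, and `R ⫫ Y` on each fiber splits every summand
into `μ {C = c} * μ[A | C = c] * μ[B | C = c]`. Independence of `C` and `Y` says exactly that
`μ {C = c} * μ[B | C = c] = μ {C = c} * μ B`, so `μ B` factors out of the sum and the law of total
probability, read backwards, leaves `μ A * μ B`.
-/

open MeasureTheory ProbabilityTheory
open scoped Classical

namespace ProbabilityTheory

variable {Ω ι β γ : Type*} [MeasurableSpace Ω] [Fintype ι] [MeasurableSpace ι]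
  [DiscreteMeasurableSpace ι] [MeasurableSpace β] [MeasurableSpace γ]

lemma measure_eq_sum_cond_fiber {C : Ω → ι} (hC : Measurable C) (μ : Measure Ω)
    [IsFiniteMeasure μ] (E : Set Ω) :
    μ E = ∑ c, μ (C ⁻¹' {c}) * μ[E | C ⁻¹' {c}] := by
  conv_lhs => rw [← sum_meas_smul_cond_fiber hC μ]
  simp only [Measure.coe_finsetSum, Measure.coe_smul, Finset.sum_apply, Pi.smul_apply,
    smul_eq_mul]

lemma IndepFun.of_cond_fiber {μ : Measure Ω} [IsFiniteMeasure μ] {C : Ω → ι} {R : Ω → β}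
    {Y : Ω → γ} (hC : Measurable C) (hRY : ∀ c, IndepFun R Y μ[|C ⁻¹' {c}])
    (hCY : IndepFun C Y μ) : IndepFun R Y μ := by
  rw [indepFun_iff_measure_inter_preimage_eq_mul] at hCY ⊢
  intro s t hs ht
  have hfiber : ∀ c, μ (C ⁻¹' {c}) * μ[Y ⁻¹' t | C ⁻¹' {c}] = μ (C ⁻¹' {c}) * μ (Y ⁻¹' t) :=
    fun c ↦ by
      rw [mul_comm, cond_mul_eq_inter (hC (.singleton c)), hCY {c} t (.singleton c) ht]
  calc μ (R ⁻¹' s ∩ Y ⁻¹' t)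
      = ∑ c, μ (C ⁻¹' {c}) * (μ[R ⁻¹' s | C ⁻¹' {c}] * μ[Y ⁻¹' t | C ⁻¹' {c}]) := by
        rw [measure_eq_sum_cond_fiber hC μ]
        simp_rw [(hRY _).measure_inter_preimage_eq_mul s t hs ht]
    _ = ∑ c, μ (C ⁻¹' {c}) * μ[R ⁻¹' s | C ⁻¹' {c}] * μ (Y ⁻¹' t) := by
        refine Finset.sum_congr rfl fun c _ ↦ ?_
        rw [mul_left_comm, hfiber, mul_left_comm, mul_assoc]
    _ = μ (R ⁻¹' s) * μ (Y ⁻¹' t) := by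
        rw [← Finset.sum_mul, ← measure_eq_sum_cond_fiber hC μ]

end ProbabilityTheory

theorem stmt8_general {Ω 𝒳 : Type*} [MeasurableSpace Ω]
    [MeasurableSpace 𝒳] [MeasurableSingletonClass 𝒳]
    (P : Measure Ω) [IsProbabilityMeasure P]
    (X : Ω → 𝒳) (Z C R : Ω → Fin 2) (Y : Ω → ℝ)
    (hX : Measurable X) (hZ : Measurable Z) (hC : Measurable C)
    (x : 𝒳)
    (hLMAR : ∀ c : Fin 2, IndepFun R Y (P[|X ⁻¹' {x} ∩ Z ⁻¹' {0} ∩ C ⁻¹' {c}]))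
    (hPI : IndepFun C Y (P[|X ⁻¹' {x} ∩ Z ⁻¹' {0}])) :
    IndepFun R Y (P[|X ⁻¹' {x} ∩ Z ⁻¹' {0}]) := by
  have hS : MeasurableSet (X ⁻¹' {x} ∩ Z ⁻¹' {0}) :=
    (hX (.singleton x)).inter (hZ (.singleton 0))
  refine IndepFun.of_cond_fiber hC (fun c ↦ ?_) hPI
  rw [cond_cond_eq_cond_inter hS (hC (.singleton c))]
  exact hLMAR c

/-- LMAR combined with principal ignorability (PI, stated as independence of `C` and `Y`
in the control arm given `X = x`) implies the outcome is missing at random (MAR) in the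
control arm: `R ⫫ Y` under `P(· | {X=x} ∩ {Z=0})`. -/
theorem stmt8 {Ω 𝒳 : Type*} [MeasurableSpace Ω]
    [Countable 𝒳] [MeasurableSpace 𝒳] [MeasurableSingletonClass 𝒳]
    (P : Measure Ω) [IsProbabilityMeasure P]
    (X : Ω → 𝒳) (Z C R : Ω → Fin 2) (Y : Ω → ℝ)
    (hX : Measurable X) (hZ : Measurable Z) (hC : Measurable C) (hR : Measurable R)
    (hYm : Measurable Y)
    (x : 𝒳)
    (hpos : ∀ c : Fin 2, 0 < P (X ⁻¹' {x} ∩ Z ⁻¹' {0} ∩ C ⁻¹' {c}))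
    (hLMAR : ∀ c : Fin 2, IndepFun R Y (P[|X ⁻¹' {x} ∩ Z ⁻¹' {0} ∩ C ⁻¹' {c}]))
    (hPI : IndepFun C Y (P[|X ⁻¹' {x} ∩ Z ⁻¹' {0}])) :
    IndepFun R Y (P[|X ⁻¹' {x} ∩ Z ⁻¹' {0}]) :=
  stmt8_general P X Z C R Y hX hZ hC x hLMAR hPI
end

section
/- Let π₁, λ₀ ∈ [0,1] and ϱ > 0, and set γ := (π₁ + λ₀)(ϱ − 1) + 1 and d := γ² − 4·π₁·λ₀·ϱ·(ϱ − 1). Then d = ((λ₀ − π₁)(ϱ − 1) − 1)² + 4(1 − π₁)·λ₀·(ϱ − 1), and d ≥ 0. -/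
/-!
For `ϱ ≤ 1` the subtracted term `4 π₁ λ₀ ϱ (ϱ - 1)` is nonpositive, so `d ≥ γ² ≥ 0`; for `ϱ ≥ 1`
the alternative expression of `d` is a square plus the nonnegative term `4 (1 - π₁) λ₀ (ϱ - 1)`.
-/

section ResponseDiscriminant

variable {R : Type*}

/-- The discriminant `d`, with `p, l, r` standing for `π₁, λ₀, ϱ`. -/
def responseDiscriminant [CommRing R] (p l r : R) : R :=
  ((p + l) * (r - 1) + 1) ^ 2 - 4 * p * l * r * (r - 1)

theorem responseDiscriminant_eq [CommRing R] (p l r : R) :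
    responseDiscriminant p l r = ((l - p) * (r - 1) - 1) ^ 2 + 4 * (1 - p) * l * (r - 1) := by
  unfold responseDiscriminant
  ring

variable [CommRing R] [LinearOrder R] [IsStrictOrderedRing R]

theorem responseDiscriminant_nonneg_of_le_one {p l r : R} (hp : 0 ≤ p) (hl : 0 ≤ l)
    (hr₀ : 0 ≤ r) (hr₁ : r ≤ 1) : 0 ≤ responseDiscriminant p l r := by
  have h : responseDiscriminant p l r = ((p + l) * (r - 1) + 1) ^ 2 + 4 * p * l * r * (1 - r) := by
    unfold responseDiscriminant
    ring
  rw [h]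
  exact add_nonneg (sq_nonneg _)
    (mul_nonneg (mul_nonneg (mul_nonneg (mul_nonneg zero_le_four hp) hl) hr₀) (sub_nonneg.2 hr₁))

theorem responseDiscriminant_nonneg_of_one_le {p l r : R} (hp : p ≤ 1) (hl : 0 ≤ l)
    (hr : 1 ≤ r) : 0 ≤ responseDiscriminant p l r := by
  rw [responseDiscriminant_eq]
  exact add_nonneg (sq_nonneg _)
    (mul_nonneg (mul_nonneg (mul_nonneg zero_le_four (sub_nonneg.2 hp)) hl) (sub_nonneg.2 hr))

theorem responseDiscriminant_nonneg {p l r : R} (hp₀ : 0 ≤ p) (hp₁ : p ≤ 1) (hl : 0 ≤ l)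
    (hr : 0 ≤ r) : 0 ≤ responseDiscriminant p l r := by
  rcases le_total r 1 with hr₁ | hr₁
  · exact responseDiscriminant_nonneg_of_le_one hp₀ hl hr hr₁
  · exact responseDiscriminant_nonneg_of_one_le hp₁ hl hr₁

end ResponseDiscriminant

theorem stmt10_general (π₁ lam₀ ϱ : ℝ)
    (hπ₁ : 0 ≤ π₁) (hπ₁' : π₁ ≤ 1)
    (hlam₀ : 0 ≤ lam₀)
    (hϱ : 0 < ϱ)
    (γ d : ℝ)
    (hγ : γ = (π₁ + lam₀) * (ϱ - 1) + 1)
    (hd : d = γ ^ 2 - 4 * π₁ * lam₀ * ϱ * (ϱ - 1)) :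
    d = ((lam₀ - π₁) * (ϱ - 1) - 1) ^ 2 + 4 * (1 - π₁) * lam₀ * (ϱ - 1) ∧ 0 ≤ d := by
  have hd' : d = responseDiscriminant π₁ lam₀ ϱ := by rw [hd, hγ, responseDiscriminant]
  rw [hd']
  exact ⟨responseDiscriminant_eq π₁ lam₀ ϱ, responseDiscriminant_nonneg hπ₁ hπ₁' hlam₀ hϱ.le⟩

/-- The discriminant `d := γ² − 4·π₁·lam₀·ϱ·(ϱ − 1)` of the quadratic arising from the
proportional response odds assumption, where `γ := (π₁ + lam₀)(ϱ − 1) + 1`, admits the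
alternative expression `((lam₀ − π₁)(ϱ − 1) − 1)² + 4(1 − π₁)·lam₀·(ϱ − 1)` and is
nonnegative, for `π₁, lam₀ ∈ [0,1]` and `ϱ > 0`. (`lam₀` is written for `λ₀`.) -/
theorem stmt10 (π₁ lam₀ ϱ : ℝ)
    (hπ₁ : 0 ≤ π₁) (hπ₁' : π₁ ≤ 1)
    (hlam₀ : 0 ≤ lam₀) (hlam₀' : lam₀ ≤ 1)
    (hϱ : 0 < ϱ)
    (γ d : ℝ)
    (hγ : γ = (π₁ + lam₀) * (ϱ - 1) + 1)
    (hd : d = γ ^ 2 - 4 * π₁ * lam₀ * ϱ * (ϱ - 1)) :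
    d = ((lam₀ - π₁) * (ϱ - 1) - 1) ^ 2 + 4 * (1 - π₁) * lam₀ * (ϱ - 1) ∧ 0 ≤ d :=
  stmt10_general π₁ lam₀ ϱ hπ₁ hπ₁' hlam₀ hϱ γ d hγ hd
end

section
/- Let π₁ ∈ (0,1), λ₀ ∈ (0,1), ϱ > 0 with ϱ ≠ 1, and set γ := (π₁ + λ₀)(ϱ − 1) + 1 and d := γ² − 4·π₁·λ₀·ϱ·(ϱ − 1). Suppose u, v ∈ [0,1] satisfy π₁·u + (1 − π₁)·v = λ₀ and u·(1 − v) = ϱ·v·(1 − u). Then u = (γ − √d) / (2·π₁·(ϱ − 1)) and v = ((λ₀ − π₁)(ϱ − 1) − 1 + √d) / (2·(1 − π₁)·(ϱ − 1)). -/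
/-!
Eliminating `v` through the mixture equation turns the odds equation into the quadratic
`f(x) = π₁(ϱ - 1) x² - γ x + ϱ λ₀` for `u`. Since `f 0 = ϱ λ₀ > 0 > λ₀ - 1 = f 1`, the root
`u ∈ [0,1]` is one where `f` is non-increasing, i.e. `γ - 2π₁(ϱ - 1)u ≥ 0`; as its square is `d`,
it equals `√d`, which pins down `u` and then `v`.
-/

/-- For `f x = a x² - b x + c`, a positive slope `f' u` at the root would force `f 1 ≥ 0` if
`a ≥ 0`, and `f 0 ≤ 0` if `a ≤ 0`. -/
theorem two_mul_mul_le_of_root_of_sign_change {a b c u : ℝ} (hu : 0 ≤ u) (hu' : u ≤ 1)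
    (h0 : 0 < c) (h1 : a - b + c < 0) (hroot : a * u ^ 2 - b * u + c = 0) :
    2 * a * u ≤ b := by
  by_contra! hslope
  have hf0 : c = (b - 2 * a * u) * u + a * u ^ 2 := by linear_combination hroot
  have hf1 : a - b + c = (2 * a * u - b) * (1 - u) + a * (1 - u) ^ 2 := by
    linear_combination hroot
  rcases le_total 0 a with ha | ha
  · nlinarith [mul_nonneg (sub_pos.2 hslope).le (sub_nonneg.2 hu'),
      mul_nonneg ha (sq_nonneg (1 - u))]
  · nlinarith [mul_nonneg (sub_pos.2 hslope).le hu, mul_nonpos_of_nonpos_of_nonneg ha (sq_nonneg u)]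

theorem sqrt_discrim_eq_of_root {a b c u : ℝ} (hroot : a * u ^ 2 - b * u + c = 0)
    (hslope : 2 * a * u ≤ b) : Real.sqrt (b ^ 2 - 4 * a * c) = b - 2 * a * u := by
  rw [show b ^ 2 - 4 * a * c = (b - 2 * a * u) ^ 2 by linear_combination (-4 * a) * hroot,
    Real.sqrt_sq (sub_nonneg.2 hslope)]

theorem complier_response_quadratic {π₁ lam₀ ϱ u v : ℝ}
    (hmix : π₁ * u + (1 - π₁) * v = lam₀) (hodds : u * (1 - v) = ϱ * (v * (1 - u))) :
    π₁ * (ϱ - 1) * u ^ 2 - ((π₁ + lam₀) * (ϱ - 1) + 1) * u + ϱ * lam₀ = 0 := by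
  linear_combination (π₁ - 1) * hodds - (ϱ * (1 - u) + u) * hmix

theorem stmt11_general (π₁ lam₀ ϱ : ℝ)
    (hπ₁ : 0 < π₁) (hπ₁' : π₁ < 1)
    (hlam₀ : 0 < lam₀) (hlam₀' : lam₀ < 1)
    (hϱ : 0 < ϱ) (hϱ' : ϱ ≠ 1)
    (γ d : ℝ)
    (hγ : γ = (π₁ + lam₀) * (ϱ - 1) + 1)
    (hd : d = γ ^ 2 - 4 * π₁ * lam₀ * ϱ * (ϱ - 1))
    (u v : ℝ) (hu : 0 ≤ u) (hu' : u ≤ 1)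
    (hmix : π₁ * u + (1 - π₁) * v = lam₀)
    (hodds : u * (1 - v) = ϱ * (v * (1 - u))) :
    u = (γ - Real.sqrt d) / (2 * π₁ * (ϱ - 1)) ∧
    v = ((lam₀ - π₁) * (ϱ - 1) - 1 + Real.sqrt d) / (2 * (1 - π₁) * (ϱ - 1)) := by
  have hquad : π₁ * (ϱ - 1) * u ^ 2 - γ * u + ϱ * lam₀ = 0 :=
    hγ ▸ complier_response_quadratic hmix hodds
  have hslope : 2 * (π₁ * (ϱ - 1)) * u ≤ γ :=
    two_mul_mul_le_of_root_of_sign_change hu hu' (mul_pos hϱ hlam₀)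
      (by rw [hγ]; linarith) hquad
  have hsqrt : Real.sqrt d = γ - 2 * (π₁ * (ϱ - 1)) * u := by
    rw [← sqrt_discrim_eq_of_root hquad hslope, hd]
    ring_nf
  have hϱ₁ : ϱ - 1 ≠ 0 := sub_ne_zero.2 hϱ'
  have hπ₀ : 1 - π₁ ≠ 0 := by linarith
  constructor
  · rw [hsqrt, eq_div_iff (by simp [hπ₁.ne', hϱ₁])]
    ring
  · rw [hsqrt, eq_div_iff (by simp [hπ₀, hϱ₁]), hγ]
    linear_combination (2 * (ϱ - 1)) * hmix

/-- Uniqueness of the solution of the response mixture equation combined with the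
proportional response odds assumption: if `u, v ∈ [0,1]` satisfy
`π₁·u + (1 − π₁)·v = lam₀` and `u(1 − v) = ϱ·v(1 − u)`, then `u` and `v` are given by the
closed-form expressions involving `γ := (π₁ + lam₀)(ϱ − 1) + 1` and
`d := γ² − 4·π₁·lam₀·ϱ·(ϱ − 1)`. (`lam₀` is written for `λ₀`.) -/
theorem stmt11 (π₁ lam₀ ϱ : ℝ)
    (hπ₁ : 0 < π₁) (hπ₁' : π₁ < 1)
    (hlam₀ : 0 < lam₀) (hlam₀' : lam₀ < 1)
    (hϱ : 0 < ϱ) (hϱ' : ϱ ≠ 1)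
    (γ d : ℝ)
    (hγ : γ = (π₁ + lam₀) * (ϱ - 1) + 1)
    (hd : d = γ ^ 2 - 4 * π₁ * lam₀ * ϱ * (ϱ - 1))
    (u v : ℝ) (hu : 0 ≤ u) (hu' : u ≤ 1) (hv : 0 ≤ v) (hv' : v ≤ 1)
    (hmix : π₁ * u + (1 - π₁) * v = lam₀)
    (hodds : u * (1 - v) = ϱ * (v * (1 - u))) :
    u = (γ - Real.sqrt d) / (2 * π₁ * (ϱ - 1)) ∧
    v = ((lam₀ - π₁) * (ϱ - 1) - 1 + Real.sqrt d) / (2 * (1 - π₁) * (ϱ - 1)) :=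
  stmt11_general π₁ lam₀ ϱ hπ₁ hπ₁' hlam₀ hlam₀' hϱ hϱ' γ d hγ hd u v hu hu' hmix hodds
end

section
/- Let π₁ ∈ (0,1), λ₀ ∈ (0,1), ϱ > 0 with ϱ ≠ 1, and set γ := (π₁ + λ₀)(ϱ − 1) + 1 and d := γ² − 4·π₁·λ₀·ϱ·(ϱ − 1). Define u := (γ − √d) / (2·π₁·(ϱ − 1)) and v := (λ₀ − π₁·u)/(1 − π₁). Then u ∈ [0,1], v ∈ [0,1], π₁·u + (1 − π₁)·v = λ₀, and u·(1 − v) = ϱ·v·(1 − u). -/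
/-! The complier response probability `u` is a root of
`π₁(ϱ - 1)·x² - γ·x + ϱ·λ₀`, the odds equation after eliminating `v` through the mixture
equation. This quadratic is `ϱλ₀ > 0` at `0` and `λ₀ - 1 < 0` at `1`, so exactly one of its
roots lies in `(0, 1)`, and for either sign of the leading coefficient it is the one with
`-√d`. Then `v = u / (u + ϱ(1 - u))`, which lies in `[0, 1]` together with `u`. -/

namespace Quadratic

variable {a b c : ℝ}

theorem discrim_pos_of_pos_of_add_add_neg (h0 : 0 < c) (h1 : a + b + c < 0) :
    0 < discrim a b c := by
  rw [discrim]
  rcases lt_trichotomy a 0 with ha | rfl | ha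
  · nlinarith [sq_nonneg b]
  · nlinarith
  · nlinarith [sq_nonneg (a - c)]

theorem eq_zero_of_discrim_pos (ha : a ≠ 0) (hD : 0 < discrim a b c) :
    a * (((-b - √(discrim a b c)) / (2 * a)) * ((-b - √(discrim a b c)) / (2 * a)))
      + b * ((-b - √(discrim a b c)) / (2 * a)) + c = 0 :=
  (quadratic_eq_zero_iff ha (Real.mul_self_sqrt hD.le).symm _).2 (Or.inr rfl)

theorem root_mem_Ioo (ha : a ≠ 0) (h0 : 0 < c) (h1 : a + b + c < 0) :
    (-b - √(discrim a b c)) / (2 * a) ∈ Set.Ioo 0 1 := by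
  rcases ha.lt_or_gt with ha | ha
  · have hsqrt_gt : -b < √(discrim a b c) :=
      Real.lt_sqrt_of_sq_lt (by rw [discrim]; nlinarith)
    have hsqrt_lt : √(discrim a b c) < -b - 2 * a :=
      (Real.sqrt_lt' (by linarith)).2 (by rw [discrim]; nlinarith)
    exact ⟨div_pos_of_neg_of_neg (by linarith) (by linarith),
      (div_lt_one_of_neg (by linarith)).2 (by linarith)⟩
  · have hsqrt_lt : √(discrim a b c) < -b :=
      (Real.sqrt_lt' (by linarith)).2 (by rw [discrim]; nlinarith)
    have hsqrt_gt : -b - 2 * a < √(discrim a b c) :=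
      Real.lt_sqrt_of_sq_lt (by rw [discrim]; nlinarith)
    exact ⟨div_pos (by linarith) (by linarith), (div_lt_one (by linarith)).2 (by linarith)⟩

end Quadratic

theorem mem_Icc_of_odds_eq {ϱ u v : ℝ} (hϱ : 0 < ϱ) (hu : u ∈ Set.Icc (0 : ℝ) 1)
    (hodds : u * (1 - v) = ϱ * (v * (1 - u))) : v ∈ Set.Icc (0 : ℝ) 1 := by
  obtain ⟨hu0, hu1⟩ := hu
  have hden : 0 < u + ϱ * (1 - u) := by
    rcases hu0.eq_or_lt with rfl | hu0
    · linarith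
    · nlinarith
  have hv : v * (u + ϱ * (1 - u)) = u := by linear_combination -hodds
  constructor <;> nlinarith [mul_nonneg hϱ.le (sub_nonneg.2 hu1)]

/-- Existence: the closed-form candidates `u := (γ − √d)/(2π₁(ϱ − 1))` and
`v := (lam₀ − π₁·u)/(1 − π₁)` are proper probabilities in `[0,1]` and solve both the
response mixture equation `π₁·u + (1 − π₁)·v = lam₀` and the proportional response odds
equation `u(1 − v) = ϱ·v(1 − u)`, where `γ := (π₁ + lam₀)(ϱ − 1) + 1` and
`d := γ² − 4·π₁·lam₀·ϱ·(ϱ − 1)`. (`lam₀` is written for `λ₀`.) -/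
theorem stmt12 (π₁ lam₀ ϱ : ℝ)
    (hπ₁ : 0 < π₁) (hπ₁' : π₁ < 1)
    (hlam₀ : 0 < lam₀) (hlam₀' : lam₀ < 1)
    (hϱ : 0 < ϱ) (hϱ' : ϱ ≠ 1)
    (γ d u v : ℝ)
    (hγ : γ = (π₁ + lam₀) * (ϱ - 1) + 1)
    (hd : d = γ ^ 2 - 4 * π₁ * lam₀ * ϱ * (ϱ - 1))
    (hu : u = (γ - Real.sqrt d) / (2 * π₁ * (ϱ - 1)))
    (hv : v = (lam₀ - π₁ * u) / (1 - π₁)) :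
    u ∈ Set.Icc (0 : ℝ) 1 ∧ v ∈ Set.Icc (0 : ℝ) 1 ∧
    π₁ * u + (1 - π₁) * v = lam₀ ∧
    u * (1 - v) = ϱ * (v * (1 - u)) := by
  have ha : π₁ * (ϱ - 1) ≠ 0 := mul_ne_zero hπ₁.ne' (sub_ne_zero.2 hϱ')
  have h0 : 0 < ϱ * lam₀ := mul_pos hϱ hlam₀
  have h1 : π₁ * (ϱ - 1) + -γ + ϱ * lam₀ < 0 := by
    linear_combination hlam₀' - hγ
  have hdisc : discrim (π₁ * (ϱ - 1)) (-γ) (ϱ * lam₀) = d := by rw [discrim, hd]; ring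
  have hu_root :
      u = (-(-γ) - √(discrim (π₁ * (ϱ - 1)) (-γ) (ϱ * lam₀))) / (2 * (π₁ * (ϱ - 1))) := by
    rw [hdisc, hu, neg_neg, mul_assoc]
  have hu_mem : u ∈ Set.Ioo 0 1 := hu_root ▸ Quadratic.root_mem_Ioo ha h0 h1
  have hquad : π₁ * (ϱ - 1) * (u * u) + -γ * u + ϱ * lam₀ = 0 :=
    hu_root ▸ Quadratic.eq_zero_of_discrim_pos ha
      (Quadratic.discrim_pos_of_pos_of_add_add_neg h0 h1)
  have hπ₁_ne : 1 - π₁ ≠ 0 := by linarith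
  have hmix : π₁ * u + (1 - π₁) * v = lam₀ := by
    rw [hv]; field_simp; ring
  have hodds : u * (1 - v) = ϱ * (v * (1 - u)) := by
    rw [hv]; field_simp; linear_combination -hquad - u * hγ
  have hu_Icc := Set.Ioo_subset_Icc_self hu_mem
  exact ⟨hu_Icc, mem_Icc_of_odds_eq hϱ hu_Icc hodds, hmix, hodds⟩
end

section
/- Let p ∈ [0,1], η ∈ ℝ, σ ≥ 0, ς ≥ 0, and μ₁, μ₀, κ real numbers satisfying: μ₁ − μ₀ = η·σ, p·μ₁ + (1 − p)·μ₀ = κ, and ς² = σ² + p·(1 − p)·(μ₁ − μ₀)². Then μ₁ = κ + η·(1 − p)·ς / √(1 + η²·p·(1 − p)) and μ₀ = κ − η·p·ς / √(1 + η²·p·(1 − p)). -/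
/-!
The mixture equation expresses each component mean through the observed mean and the
mean difference: `μ₁ = κ + (1 - p)(μ₁ - μ₀)` and `μ₀ = κ - p(μ₁ - μ₀)`. Under the
sensitivity assumption `μ₁ - μ₀ = η σ` the variance decomposition becomes
`ς² = σ² (1 + η² p (1 - p))`, so `σ = ς / √(1 + η² p (1 - p))`, and substituting this into
the two means gives the claim.
-/

lemma mixture_means_eq_of_mix {p μ₁ μ₀ κ : ℝ} (hmix : p * μ₁ + (1 - p) * μ₀ = κ) :
    μ₁ = κ + (1 - p) * (μ₁ - μ₀) ∧ μ₀ = κ - p * (μ₁ - μ₀) :=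
  ⟨by linear_combination hmix, by linear_combination hmix⟩

lemma mixture_sd_eq_mul_sqrt {p η σ ζ d : ℝ} (hσ : 0 ≤ σ) (hζ : 0 ≤ ζ) (hd : d = η * σ)
    (hvar : ζ ^ 2 = σ ^ 2 + p * (1 - p) * d ^ 2) :
    ζ = σ * Real.sqrt (1 + η ^ 2 * p * (1 - p)) := by
  have hsq : ζ ^ 2 = σ ^ 2 * (1 + η ^ 2 * p * (1 - p)) := by
    rw [hvar, hd]; ring
  rw [← Real.sqrt_sq hζ, hsq, Real.sqrt_mul (sq_nonneg σ), Real.sqrt_sq hσ]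

lemma one_add_sq_mul_mul_one_sub_pos (η : ℝ) {p : ℝ} (hp : 0 ≤ p) (hp' : p ≤ 1) :
    0 < 1 + η ^ 2 * p * (1 - p) :=
  add_pos_of_pos_of_nonneg one_pos (mul_nonneg (mul_nonneg (sq_nonneg η) hp) (sub_nonneg.2 hp'))

/-- Solving the outcome mixture equation under the standardized-mean-difference
sensitivity assumption with equal component variances (PIsens-SMDe): if `μ₁ − μ₀ = η·σ`,
`p·μ₁ + (1 − p)·μ₀ = κ`, and `ς² = σ² + p(1 − p)(μ₁ − μ₀)²` (mixture variance
decomposition), then `μ₁ = κ + η(1 − p)·ς/√(1 + η²p(1 − p))` and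
`μ₀ = κ − η·p·ς/√(1 + η²p(1 − p))`. (`ς` is written `ζ`.) -/
theorem stmt15 (p η σ ζ μ₁ μ₀ κ : ℝ)
    (hp : 0 ≤ p) (hp' : p ≤ 1)
    (hσ : 0 ≤ σ) (hζ : 0 ≤ ζ)
    (hSMD : μ₁ - μ₀ = η * σ)
    (hmix : p * μ₁ + (1 - p) * μ₀ = κ)
    (hvar : ζ ^ 2 = σ ^ 2 + p * (1 - p) * (μ₁ - μ₀) ^ 2) :
    μ₁ = κ + η * (1 - p) * ζ / Real.sqrt (1 + η ^ 2 * p * (1 - p)) ∧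
    μ₀ = κ - η * p * ζ / Real.sqrt (1 + η ^ 2 * p * (1 - p)) := by
  obtain ⟨h₁, h₀⟩ := mixture_means_eq_of_mix hmix
  have hs : 0 < Real.sqrt (1 + η ^ 2 * p * (1 - p)) :=
    Real.sqrt_pos.2 (one_add_sq_mul_mul_one_sub_pos η hp hp')
  have hσζ : σ = ζ / Real.sqrt (1 + η ^ 2 * p * (1 - p)) := by
    rw [mixture_sd_eq_mul_sqrt hσ hζ hSMD hvar, mul_div_cancel_right₀ _ hs.ne']
  rw [hSMD, hσζ] at h₁ h₀
  exact ⟨h₁.trans (by ring), h₀.trans (by ring)⟩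
end

section
/- Let l < h be real numbers, p ∈ (0,1), κ ∈ (l,h), and ψ > 0 with ψ ≠ 1. Set k := (κ − l)/(h − l), α := (p + k)(ψ − 1) + 1, and β := √(α² − 4·p·k·ψ·(ψ − 1)). Suppose μ₁, μ₀ ∈ [l,h] satisfy p·μ₁ + (1 − p)·μ₀ = κ and (μ₁ − l)·(h − μ₀) = ψ·(μ₀ − l)·(h − μ₁). Then μ₁ = ((α − β)/(2·(ψ − 1)·p))·(h − l) + l and μ₀ = (κ − p·μ₁)/(1 − p). -/
/-!
After the affine change of variables `u = (μ₁ - l)/(h - l)`, `v = (μ₀ - l)/(h - l)`,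
eliminating `v` from the two equations leaves the quadratic
`f(u) = (ψ - 1)p·u² - α·u + ψk = 0`. Since `f(0) = ψk > 0` and `f(1) = k - 1 < 0`, the root
`u ∈ [0,1]` is the one where `f` crosses zero downwards, `f'(u) = 2(ψ - 1)p·u - α < 0`,
and this singles out the branch `(α - β)/(2(ψ - 1)p)` of the quadratic formula.
-/

open Set

lemma eq_sub_sqrt_div_of_quadratic_eq_zero {a b c x : ℝ} (ha : a ≠ 0)
    (hx : a * x ^ 2 - b * x + c = 0) (hb : 2 * a * x ≤ b) :
    x = (b - √(b ^ 2 - 4 * a * c)) / (2 * a) := by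
  have hdisc : b ^ 2 - 4 * a * c = (b - 2 * a * x) ^ 2 := by
    linear_combination (-4 * a) * hx
  rw [hdisc, Real.sqrt_sq (by linarith)]
  field_simp
  ring

lemma two_mul_mul_lt_of_quadratic_eq_zero {a b c x : ℝ} (hx : a * x ^ 2 - b * x + c = 0)
    (hx01 : x ∈ Icc 0 1) (h0 : 0 < c) (h1 : a - b + c < 0) : 2 * a * x < b := by
  have hx0 : 0 < x := by
    refine lt_of_le_of_ne hx01.1 ?_
    rintro rfl
    linarith
  have hx1 : x < 1 := by
    refine lt_of_le_of_ne hx01.2 ?_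
    rintro rfl
    linarith
  rcases le_or_gt a 0 with ha | ha
  · have hprod : x * (b - a * x) = c := by linear_combination -hx
    have : 0 < b - a * x := pos_of_mul_pos_right (hprod ▸ h0) hx0.le
    nlinarith
  · have hprod : (1 - x) * (b - a * (x + 1)) = b - a - c := by linear_combination hx
    have : 0 < (1 - x) * (b - a * (x + 1)) := by rw [hprod]; linarith
    have : 0 < b - a * (x + 1) := pos_of_mul_pos_right this (by linarith)
    nlinarith

lemma eq_gor_root_of_mem_unitInterval {p k ψ α β u v : ℝ} (hp : 0 < p) (hk : 0 < k)
    (hk' : k < 1) (hψ : 0 < ψ) (hψ' : ψ ≠ 1) (hα : α = (p + k) * (ψ - 1) + 1)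
    (hβ : β = √(α ^ 2 - 4 * p * k * ψ * (ψ - 1))) (hu : u ∈ Icc 0 1)
    (hmix : p * u + (1 - p) * v = k) (hGOR : u * (1 - v) = ψ * (v * (1 - u))) :
    u = (α - β) / (2 * (ψ - 1) * p) := by
  have hquad : (ψ - 1) * p * u ^ 2 - α * u + ψ * k = 0 := by
    linear_combination -(u + ψ * (1 - u)) * hmix - (1 - p) * hGOR - u * hα
  have hdescent : 2 * ((ψ - 1) * p) * u < α :=
    two_mul_mul_lt_of_quadratic_eq_zero hquad hu (by positivity) (by linarith)
  have ha : (ψ - 1) * p ≠ 0 := mul_ne_zero (sub_ne_zero.mpr hψ') hp.ne'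
  rw [hβ, show 4 * p * k * ψ * (ψ - 1) = 4 * ((ψ - 1) * p) * (ψ * k) by ring,
    show 2 * (ψ - 1) * p = 2 * ((ψ - 1) * p) by ring]
  exact eq_sub_sqrt_div_of_quadratic_eq_zero ha hquad hdescent.le

theorem stmt16_general (l h p κ ψ : ℝ)
    (hlh : l < h) (hp : 0 < p) (hp' : p < 1)
    (hκ : l < κ) (hκ' : κ < h)
    (hψ : 0 < ψ) (hψ' : ψ ≠ 1)
    (k α β μ₁ μ₀ : ℝ)
    (hk : k = (κ - l) / (h - l))
    (hα : α = (p + k) * (ψ - 1) + 1)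
    (hβ : β = Real.sqrt (α ^ 2 - 4 * p * k * ψ * (ψ - 1)))
    (hμ₁mem : μ₁ ∈ Set.Icc l h)
    (hmix : p * μ₁ + (1 - p) * μ₀ = κ)
    (hGOR : (μ₁ - l) * (h - μ₀) = ψ * ((μ₀ - l) * (h - μ₁))) :
    μ₁ = (α - β) / (2 * (ψ - 1) * p) * (h - l) + l ∧
    μ₀ = (κ - p * μ₁) / (1 - p) := by
  have hH : 0 < h - l := sub_pos.mpr hlh
  have hk0 : 0 < k := hk ▸ div_pos (sub_pos.mpr hκ) hH
  have hk1 : k < 1 := hk ▸ (div_lt_one hH).mpr (by linarith)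
  have hu : (μ₁ - l) / (h - l) ∈ Icc 0 1 :=
    ⟨div_nonneg (by linarith [hμ₁mem.1]) hH.le, (div_le_one hH).mpr (by linarith [hμ₁mem.2])⟩
  have hmix' : p * ((μ₁ - l) / (h - l)) + (1 - p) * ((μ₀ - l) / (h - l)) = k := by
    rw [hk]; field_simp; linear_combination hmix
  have hGOR' : (μ₁ - l) / (h - l) * (1 - (μ₀ - l) / (h - l))
      = ψ * ((μ₀ - l) / (h - l) * (1 - (μ₁ - l) / (h - l))) := by
    field_simp; linear_combination hGOR
  have hroot := eq_gor_root_of_mem_unitInterval hp hk0 hk1 hψ hψ' hα hβ hu hmix' hGOR'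
  constructor
  · rw [← hroot]; field_simp; ring
  · rw [eq_div_iff (by linarith)]; linarith

/-- Solving the outcome mixture equation under the generalized-odds-ratio sensitivity
assumption (PIsens-GOR) for an outcome bounded in `[l,h]`: if `μ₁, μ₀ ∈ [l,h]` satisfy the
mixture equation `p·μ₁ + (1 − p)·μ₀ = κ` and the GOR equation
`(μ₁ − l)(h − μ₀) = ψ(μ₀ − l)(h − μ₁)`, then with `k := (κ − l)/(h − l)`,
`α := (p + k)(ψ − 1) + 1` and `β := √(α² − 4pkψ(ψ − 1))`, we have
`μ₁ = ((α − β)/(2(ψ − 1)p))(h − l) + l` and `μ₀ = (κ − p·μ₁)/(1 − p)`. -/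
theorem stmt16 (l h p κ ψ : ℝ)
    (hlh : l < h) (hp : 0 < p) (hp' : p < 1)
    (hκ : l < κ) (hκ' : κ < h)
    (hψ : 0 < ψ) (hψ' : ψ ≠ 1)
    (k α β μ₁ μ₀ : ℝ)
    (hk : k = (κ - l) / (h - l))
    (hα : α = (p + k) * (ψ - 1) + 1)
    (hβ : β = Real.sqrt (α ^ 2 - 4 * p * k * ψ * (ψ - 1)))
    (hμ₁mem : μ₁ ∈ Set.Icc l h) (hμ₀mem : μ₀ ∈ Set.Icc l h)
    (hmix : p * μ₁ + (1 - p) * μ₀ = κ)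
    (hGOR : (μ₁ - l) * (h - μ₀) = ψ * ((μ₀ - l) * (h - μ₁))) :
    μ₁ = (α - β) / (2 * (ψ - 1) * p) * (h - l) + l ∧
    μ₀ = (κ - p * μ₁) / (1 - p) :=
  stmt16_general l h p κ ψ hlh hp hp' hκ hκ' hψ hψ' k α β μ₁ μ₀ hk hα hβ hμ₁mem hmix hGOR
end

section
/- Let X : Ω → 𝒳 have countable range and Z, C, R : Ω → {0,1}. Fix x ∈ 𝒳 and assume: P({X=x} ∩ {Z=1}) > 0; P({X=x} ∩ {Z=0} ∩ {C=c}) > 0 for both c ∈ {0,1}; P({X=x} ∩ {Z=0} ∩ {R=1}) > 0; P(C=c | {X=x} ∩ {Z=0}) = P(C=c | {X=x} ∩ {Z=1}) for both c; and P(R=1 | {X=x} ∩ {Z=0} ∩ {C=1}) = P(R=1 | {X=x} ∩ {Z=0} ∩ {C=0}) (response principal ignorability). Then for both c ∈ {0,1}: P(R=1 | {X=x} ∩ {Z=0} ∩ {C=c}) = P(R=1 | {X=x} ∩ {Z=0}) and P(C=c | {X=x} ∩ {Z=0} ∩ {R=1}) = P(C=c | {X=x} ∩ {Z=1}). -/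
open MeasureTheory ProbabilityTheory
open scoped Classical

/-! If `R` is independent of the binary stratum `C` within the control arm `B`, then the response
rate in each stratum is the overall rate, the mediant of two equal ratios. By the symmetry of
independence, conditioning on response leaves the stratum proportions of `B` unchanged, and
these are the treatment-arm proportions by assumption. -/

theorem div_eq_add_div_add_of_div_eq {K : Type*} [Field K] {a b c d : K}
    (hb : b ≠ 0) (hd : d ≠ 0) (hbd : b + d ≠ 0) (h : a / b = c / d) :
    a / b = (a + c) / (b + d) := by
  rw [div_eq_div_iff hb hd] at h
  rw [div_eq_div_iff hb hbd]
  linear_combination h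

section

variable {Ω : Type*} [MeasurableSpace Ω] (P : Measure Ω) [IsFiniteMeasure P]

theorem toReal_measure_eq_add_inter_preimage_fin_two {C : Ω → Fin 2} (hC : Measurable C)
    (B : Set Ω) :
    (P B).toReal = (P (B ∩ C ⁻¹' {0})).toReal + (P (B ∩ C ⁻¹' {1})).toReal := by
  have hdiff : B \ C ⁻¹' {0} = B ∩ C ⁻¹' {1} := by
    ext ω
    simp only [Set.mem_sdiff, Set.mem_inter_iff, Set.mem_preimage, Set.mem_singleton_iff]
    exact and_congr_right fun _ => by omega
  rw [← measure_inter_add_sdiff B (hC (measurableSet_singleton 0)), hdiff,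
    ENNReal.toReal_add (measure_ne_top _ _) (measure_ne_top _ _)]

theorem cPr_inter_preimage_eq_cPr_of_fin_two {C : Ω → Fin 2} (hC : Measurable C) (A B : Set Ω)
    (hpos : ∀ c, 0 < P (B ∩ C ⁻¹' {c}))
    (h : cPr P A (B ∩ C ⁻¹' {1}) = cPr P A (B ∩ C ⁻¹' {0})) (c : Fin 2) :
    cPr P A (B ∩ C ⁻¹' {c}) = cPr P A B := by
  have hb : ∀ c, 0 < (P (B ∩ C ⁻¹' {c})).toReal := fun c =>
    ENNReal.toReal_pos (hpos c).ne' (measure_ne_top _ _)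
  unfold cPr at h ⊢
  rw [toReal_measure_eq_add_inter_preimage_fin_two P hC B,
    toReal_measure_eq_add_inter_preimage_fin_two P hC (A ∩ B)]
  simp only [Set.inter_assoc]
  fin_cases c
  · exact div_eq_add_div_add_of_div_eq (hb 0).ne' (hb 1).ne' (add_pos (hb 0) (hb 1)).ne' h.symm
  · rw [add_comm, add_comm (P (B ∩ C ⁻¹' {0})).toReal]
    exact div_eq_add_div_add_of_div_eq (hb 1).ne' (hb 0).ne' (add_pos (hb 1) (hb 0)).ne' h

theorem cPr_inter_eq_cPr_symm {B E F : Set Ω} (hE : 0 < P (B ∩ E)) (hF : 0 < P (B ∩ F))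
    (h : cPr P E (B ∩ F) = cPr P E B) :
    cPr P F (B ∩ E) = cPr P F B := by
  have hpos : ∀ {s : Set Ω}, 0 < P s → (P s).toReal ≠ 0 := fun hs =>
    (ENNReal.toReal_pos hs.ne' (measure_ne_top _ _)).ne'
  have hB : 0 < P B := hE.trans_le (measure_mono Set.inter_subset_left)
  have hEF : F ∩ (B ∩ E) = E ∩ (B ∩ F) := by
    ext ω
    simp only [Set.mem_inter_iff]
    tauto
  unfold cPr at h ⊢
  rw [Set.inter_comm E B, div_eq_div_iff (hpos hF) (hpos hB)] at h
  rw [hEF, Set.inter_comm F B, div_eq_div_iff (hpos hE) (hpos hB)]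
  linear_combination h

end

theorem stmt17_general {Ω 𝒳 : Type*} [MeasurableSpace Ω]
    (P : Measure Ω) [IsProbabilityMeasure P]
    (X : Ω → 𝒳) (Z C R : Ω → Fin 2)
    (hC : Measurable C)
    (x : 𝒳)
    (h2 : ∀ c : Fin 2, 0 < P (X ⁻¹' {x} ∩ Z ⁻¹' {0} ∩ C ⁻¹' {c}))
    (h3 : 0 < P (X ⁻¹' {x} ∩ Z ⁻¹' {0} ∩ R ⁻¹' {1}))
    (hTA : ∀ c : Fin 2, cPr P (C ⁻¹' {c}) (X ⁻¹' {x} ∩ Z ⁻¹' {0})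
        = cPr P (C ⁻¹' {c}) (X ⁻¹' {x} ∩ Z ⁻¹' {1}))
    (hrPI : cPr P (R ⁻¹' {1}) (X ⁻¹' {x} ∩ Z ⁻¹' {0} ∩ C ⁻¹' {1})
        = cPr P (R ⁻¹' {1}) (X ⁻¹' {x} ∩ Z ⁻¹' {0} ∩ C ⁻¹' {0})) :
    ∀ c : Fin 2,
      cPr P (R ⁻¹' {1}) (X ⁻¹' {x} ∩ Z ⁻¹' {0} ∩ C ⁻¹' {c})
        = cPr P (R ⁻¹' {1}) (X ⁻¹' {x} ∩ Z ⁻¹' {0}) ∧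
      cPr P (C ⁻¹' {c}) (X ⁻¹' {x} ∩ Z ⁻¹' {0} ∩ R ⁻¹' {1})
        = cPr P (C ⁻¹' {c}) (X ⁻¹' {x} ∩ Z ⁻¹' {1}) := by
  intro c
  have hresponse := cPr_inter_preimage_eq_cPr_of_fin_two P hC _ _ h2 hrPI c
  exact ⟨hresponse, (cPr_inter_eq_cPr_symm P h3 (h2 c) hresponse).trans (hTA c)⟩

/-- Under response principal ignorability (rPI) and equality of stratum probabilities
across arms, the stratum-specific response probabilities under control both equal the
overall control-arm response probability, and the mixture weights among control-arm
responders equal the treatment-arm stratum probabilities. -/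
theorem stmt17 {Ω 𝒳 : Type*} [MeasurableSpace Ω]
    [Countable 𝒳] [MeasurableSpace 𝒳] [MeasurableSingletonClass 𝒳]
    (P : Measure Ω) [IsProbabilityMeasure P]
    (X : Ω → 𝒳) (Z C R : Ω → Fin 2)
    (hX : Measurable X) (hZ : Measurable Z) (hC : Measurable C) (hR : Measurable R)
    (x : 𝒳)
    (h1 : 0 < P (X ⁻¹' {x} ∩ Z ⁻¹' {1}))
    (h2 : ∀ c : Fin 2, 0 < P (X ⁻¹' {x} ∩ Z ⁻¹' {0} ∩ C ⁻¹' {c}))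
    (h3 : 0 < P (X ⁻¹' {x} ∩ Z ⁻¹' {0} ∩ R ⁻¹' {1}))
    (hTA : ∀ c : Fin 2, cPr P (C ⁻¹' {c}) (X ⁻¹' {x} ∩ Z ⁻¹' {0})
        = cPr P (C ⁻¹' {c}) (X ⁻¹' {x} ∩ Z ⁻¹' {1}))
    (hrPI : cPr P (R ⁻¹' {1}) (X ⁻¹' {x} ∩ Z ⁻¹' {0} ∩ C ⁻¹' {1})
        = cPr P (R ⁻¹' {1}) (X ⁻¹' {x} ∩ Z ⁻¹' {0} ∩ C ⁻¹' {0})) :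
    ∀ c : Fin 2,
      cPr P (R ⁻¹' {1}) (X ⁻¹' {x} ∩ Z ⁻¹' {0} ∩ C ⁻¹' {c})
        = cPr P (R ⁻¹' {1}) (X ⁻¹' {x} ∩ Z ⁻¹' {0}) ∧
      cPr P (C ⁻¹' {c}) (X ⁻¹' {x} ∩ Z ⁻¹' {0} ∩ R ⁻¹' {1})
        = cPr P (C ⁻¹' {c}) (X ⁻¹' {x} ∩ Z ⁻¹' {1}) :=
  stmt17_general P X Z C R hC x h2 h3 hTA hrPI
end
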